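/- arXiv:0902.2202 — 2 statements merged into one kernel-verified Lean document; each statement's English description precedes it below -/
import Mathlib

section
/- The Hochschild differential is a graded derivation of the Gerstenhaber bracket: for all D ∈ C^d(A) and E ∈ C^e(A), δ[D,E] = [δD, E] + (−1)^{d+1} [D, δE] in C^{d+e}(A). -/
/-!
Write `f ∘ g` for the circle product and `[f, g]` for the Gerstenhaber bracket, with a cochain of
arity `d` in degree `d - 1`. Since `δ = [m, ·]`, the claim is the graded Jacobi identity
`[m, [D, E]] = [[m, D], E] + (-1)^(d+1) [D, [m, E]]`. That identity follows formally, by a parity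
check on the signs, from the pre-Lie identity: the associator `(f ∘ g) ∘ h - f ∘ (g ∘ h)` is graded
symmetric in `g` and `h`. For the pre-Lie identity, expand `(f ∘ g) ∘ h` as a double sum and sort
its terms by where `h` lands relative to `g`: inside `g` gives exactly `f ∘ (g ∘ h)`, and the
remaining terms, with `g` and `h` in two distinct slots of `f`, are symmetric under swapping them.
-/

namespace NCCalc

variable {K A : Type*}

/-- Extend a finite tuple to a sequence by zero. -/
def pad [Zero A] {n : ℕ} (a : Fin n → A) : ℕ → A :=
  fun i => if h : i < n then a ⟨i, h⟩ else 0

/-- Restrict a cochain given on sequences to a cochain of arity `n`. -/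
def res [Zero A] (n : ℕ) (F : (ℕ → A) → A) : (Fin n → A) → A :=
  fun a => F (pad a)

section AddCommGroupA
variable [AddCommGroup A]

/-- The circle (composition) product of Hochschild cochains:
`(D∘E)(a_1,…,a_{d+e−1}) = Σ_{j=0}^{d−1} (−1)^{(e+1)j} D(a_1,…,a_j, E(a_{j+1},…,a_{j+e}), …)`. -/
def circ (d e : ℕ) (D : (Fin d → A) → A) (E : (Fin e → A) → A) : (ℕ → A) → A :=
  fun a => ∑ j ∈ Finset.range d, ((-1 : ℤ) ^ ((e + 1) * j)) •
    D (fun i => if (i : ℕ) < j then a i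
        else if (i : ℕ) = j then E (fun t => a (j + (t : ℕ)))
        else a ((i : ℕ) + e - 1))

/-- The Gerstenhaber bracket `[D,E] = D∘E − (−1)^{(d+1)(e+1)} E∘D`. -/
def gbr (d e : ℕ) (D : (Fin d → A) → A) (E : (Fin e → A) → A) : (ℕ → A) → A :=
  fun a => circ d e D E a - ((-1 : ℤ) ^ ((d + 1) * (e + 1))) • circ e d E D a

end AddCommGroupA

section RingA
variable [Ring A]

/-- The cup product `(D⌣E)(a_1,…,a_{d+e}) = D(a_1,…,a_d)·E(a_{d+1},…,a_{d+e})`. -/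
def cup (d e : ℕ) (D : (Fin d → A) → A) (E : (Fin e → A) → A) : (ℕ → A) → A :=
  fun a => D (fun i => a (i : ℕ)) * E (fun i => a (d + (i : ℕ)))

/-- The Hochschild differential
`(δD)(a_1,…,a_{d+1}) = D(a_1,…,a_d)·a_{d+1} + (−1)^{d+1} a_1·D(a_2,…,a_{d+1})
  + Σ_{j=1}^{d} (−1)^{d+1+j} D(a_1,…,a_j a_{j+1},…,a_{d+1})` (indices shifted to start at 0). -/
def hdel (d : ℕ) (D : (Fin d → A) → A) : (ℕ → A) → A :=
  fun a => D (fun i => a (i : ℕ)) * a d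
    + ((-1 : ℤ) ^ (d + 1)) • (a 0 * D (fun i => a ((i : ℕ) + 1)))
    + ∑ j ∈ Finset.range d, ((-1 : ℤ) ^ (d + 1 + (j + 1))) •
        D (fun i => if (i : ℕ) < j then a i
            else if (i : ℕ) = j then a j * a (j + 1)
            else a ((i : ℕ) + 1))

end RingA

/-- Hochschild `d`-cochains: `K`-multilinear maps `A^d → A`. -/
abbrev Cochain (K A : Type*) [CommRing K] [AddCommGroup A] [Module K A] (d : ℕ) :=
  MultilinearMap K (fun _ : Fin d => A) A

open Finset

lemma neg_one_pow_eq_of_eq_add_two_mul {m n s : ℕ} (h : n = m + 2 * s) :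
    (-1 : ℤ) ^ n = (-1) ^ m := by
  rw [h, pow_add, pow_mul]; simp

section SequenceCochains

/- A cochain of arity `n` is modelled as a function of sequences `ℕ → A` reading only its first
`n` entries (`DependsOnFirst`), so that inserting cochains into each other needs no `Fin`
arithmetic. -/

def insertArgs (j e : ℕ) (g : (ℕ → A) → A) (a : ℕ → A) : ℕ → A :=
  fun i => if i < j then a i else if i = j then g (fun t => a (j + t)) else a (i + e - 1)

section insertArgs
variable {i j e : ℕ} {g : (ℕ → A) → A} {a : ℕ → A}

lemma insertArgs_of_lt (h : i < j) : insertArgs j e g a i = a i := if_pos h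

lemma insertArgs_self : insertArgs j e g a j = g (fun t => a (j + t)) := by
  simp [insertArgs]

lemma insertArgs_of_gt (h : j < i) : insertArgs j e g a i = a (i + e - 1) := by
  simp [insertArgs, h.not_gt, h.ne']

end insertArgs

def DependsOnFirst (n : ℕ) (f : (ℕ → A) → A) : Prop :=
  ∀ a b : ℕ → A, (∀ i < n, a i = b i) → f a = f b

def ofFin (n : ℕ) (F : (Fin n → A) → A) : (ℕ → A) → A := fun b => F (fun i => b i)

lemma dependsOnFirst_ofFin (n : ℕ) (F : (Fin n → A) → A) : DependsOnFirst n (ofFin n F) :=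
  fun _ _ hab => congrArg F (funext fun i => hab i i.isLt)

/-- Two insertions into distinct slots `p < q`: `g` (of arity `y`) in slot `p` and
`h` (of arity `z`) in slot `q`. -/
def insertPair (p q y z : ℕ) (g h : (ℕ → A) → A) (a : ℕ → A) : ℕ → A :=
  insertArgs p y g (insertArgs (q + y - 1) z h a)

lemma insertArgs_insertArgs_of_le_of_lt {j k y z : ℕ} (g h : (ℕ → A) → A) (a : ℕ → A)
    (hjk : j ≤ k) (hky : k < j + y) :
    insertArgs j y g (insertArgs k z h a)
      = insertArgs j (y + z - 1) (fun b => g (insertArgs (k - j) z h b)) a := by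
  funext i
  rcases lt_trichotomy i j with hij | rfl | hij
  · rw [insertArgs_of_lt hij, insertArgs_of_lt (by omega), insertArgs_of_lt hij]
  · rw [insertArgs_self, insertArgs_self]
    congr 1
    funext t
    rcases lt_trichotomy t (k - i) with htk | rfl | htk
    · rw [insertArgs_of_lt (by omega), insertArgs_of_lt htk]
    · rw [insertArgs_self, show i + (k - i) = k by omega, insertArgs_self]
      congr 1; funext s; congr 1; omega
    · rw [insertArgs_of_gt (by omega), insertArgs_of_gt htk]
      congr 1; omega
  · rw [insertArgs_of_gt hij, insertArgs_of_gt (by omega), insertArgs_of_gt hij]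
    congr 1; omega

lemma insertArgs_insertArgs_of_lt {j k y z : ℕ} (g : (ℕ → A) → A) {h : (ℕ → A) → A}
    (hh : DependsOnFirst z h) (a : ℕ → A) (hkj : k < j) :
    insertArgs j y g (insertArgs k z h a) = insertPair k j z y h g a := by
  funext i
  simp only [insertPair]
  rcases lt_trichotomy i k with hik | rfl | hik
  · rw [insertArgs_of_lt (by omega), insertArgs_of_lt hik, insertArgs_of_lt hik,
      insertArgs_of_lt (by omega)]
  · rw [insertArgs_of_lt hkj, insertArgs_self, insertArgs_self]
    exact hh _ _ fun t ht => (insertArgs_of_lt (by omega)).symm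
  rcases lt_trichotomy i j with hij | rfl | hij
  · rw [insertArgs_of_lt hij, insertArgs_of_gt hik, insertArgs_of_gt hik,
      insertArgs_of_lt (by omega)]
  · rw [insertArgs_self, insertArgs_of_gt hik, insertArgs_self]
    congr 1
    funext t
    rw [insertArgs_of_gt (by omega)]
    congr 1; omega
  · rw [insertArgs_of_gt hij, insertArgs_of_gt (by omega), insertArgs_of_gt hik,
      insertArgs_of_gt (by omega)]
    congr 1; omega

variable [AddCommGroup A]

def SlotAdditive (n : ℕ) (f : (ℕ → A) → A) : Prop :=
  ∀ j < n, ∀ (a : ℕ → A) (x y : A),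
    f (Function.update a j (x + y)) = f (Function.update a j x) + f (Function.update a j y)

lemma SlotAdditive.exists_addMonoidHom {n j : ℕ} {f : (ℕ → A) → A} (hf : SlotAdditive n f)
    (hj : j < n) (e : ℕ) (a : ℕ → A) :
    ∃ φ : A →+ A, ∀ g, f (insertArgs j e g a) = φ (g (fun t => a (j + t))) := by
  refine ⟨AddMonoidHom.mk' (fun x => f (Function.update (insertArgs j e 0 a) j x))
    (hf j hj _), fun g => congrArg f ?_⟩
  funext i
  rcases lt_trichotomy i j with h | rfl | h
  · simp [Function.update_of_ne h.ne, insertArgs_of_lt h]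
  · simp [insertArgs_self]
  · simp [Function.update_of_ne h.ne', insertArgs_of_gt h]

def circSeq (d e : ℕ) (f g : (ℕ → A) → A) : (ℕ → A) → A :=
  fun a => ∑ j ∈ range d, ((-1 : ℤ) ^ ((e + 1) * j)) • f (insertArgs j e g a)

def gbrSeq (d e : ℕ) (f g : (ℕ → A) → A) : (ℕ → A) → A :=
  fun a => circSeq d e f g a - ((-1 : ℤ) ^ ((d + 1) * (e + 1))) • circSeq e d g f a

lemma circSeq_gbrSeq_left (n e x y : ℕ) (f g h : (ℕ → A) → A) (a : ℕ → A) :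
    circSeq n e (gbrSeq x y f g) h a
      = circSeq n e (circSeq x y f g) h a
        - (-1 : ℤ) ^ ((x + 1) * (y + 1)) • circSeq n e (circSeq y x g f) h a := by
  simp only [circSeq, gbrSeq, smul_sum, smul_sub, smul_smul, ← sum_sub_distrib, mul_comm,
    mul_assoc]

lemma circSeq_gbrSeq_right {n : ℕ} (e x y : ℕ) {f : (ℕ → A) → A} (hf : SlotAdditive n f)
    (g h : (ℕ → A) → A) (a : ℕ → A) :
    circSeq n e f (gbrSeq x y g h) a
      = circSeq n e f (circSeq x y g h) a
        - (-1 : ℤ) ^ ((x + 1) * (y + 1)) • circSeq n e f (circSeq y x h g) a := by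
  simp only [circSeq, smul_sum, ← sum_sub_distrib]
  refine sum_congr rfl fun j hj => ?_
  obtain ⟨φ, hφ⟩ := hf.exists_addMonoidHom (mem_range.1 hj) e a
  simp only [hφ, gbrSeq, map_sub, map_zsmul, smul_sub, smul_smul, mul_comm]

lemma circSeq_circSeq_left (x y z : ℕ) (f g h : (ℕ → A) → A) (a : ℕ → A) :
    circSeq (x + y - 1) z (circSeq x y f g) h a
      = ∑ j ∈ range x, ∑ k ∈ range (x + y - 1), ((-1 : ℤ) ^ ((z + 1) * k + (y + 1) * j)) •
          f (insertArgs j y g (insertArgs k z h a)) := by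
  simp only [circSeq, smul_sum, smul_smul, ← pow_add]
  exact sum_comm

lemma circSeq_circSeq_right {x y : ℕ} (z : ℕ) {f : (ℕ → A) → A} (hf : SlotAdditive x f)
    (g h : (ℕ → A) → A) (a : ℕ → A) :
    circSeq x (y + z - 1) f (circSeq y z g h) a
      = ∑ j ∈ range x, ∑ t ∈ range y, ((-1 : ℤ) ^ ((z + 1) * (j + t) + (y + 1) * j)) •
          f (insertArgs j y g (insertArgs (j + t) z h a)) := by
  refine sum_congr rfl fun j hj => ?_
  obtain ⟨φ, hφ⟩ := hf.exists_addMonoidHom (mem_range.1 hj) (y + z - 1) a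
  rw [hφ]
  simp only [circSeq, map_sum, map_zsmul, smul_sum, smul_smul]
  refine sum_congr rfl fun t ht => ?_
  have ht : t < y := mem_range.1 ht
  rw [insertArgs_insertArgs_of_le_of_lt g h a (by omega) (by omega), Nat.add_sub_cancel_left,
    hφ, ← pow_add, Nat.sub_add_cancel (by omega : 1 ≤ y + z)]
  congr 1
  exact (neg_one_pow_eq_of_eq_add_two_mul (s := j) (by ring)).symm

/-- The terms of `(f ∘ g) ∘ h` with `g` in slot `j` of `f`, split according to whether `h`
lands before `g`, inside `g`, or after `g`. -/
lemma sum_insertArgs_split {x j : ℕ} (y z : ℕ) (hj : j < x) (f g : (ℕ → A) → A)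
    {h : (ℕ → A) → A} (hh : DependsOnFirst z h) (a : ℕ → A) :
    ∑ k ∈ range (x + y - 1), ((-1 : ℤ) ^ ((z + 1) * k + (y + 1) * j)) •
        f (insertArgs j y g (insertArgs k z h a))
      = ∑ k ∈ range j, ((-1 : ℤ) ^ ((z + 1) * k + (y + 1) * j)) • f (insertPair k j z y h g a)
        + ∑ t ∈ range y, ((-1 : ℤ) ^ ((z + 1) * (j + t) + (y + 1) * j)) •
            f (insertArgs j y g (insertArgs (j + t) z h a))
        + ∑ s ∈ range (x - 1 - j), ((-1 : ℤ) ^ ((z + 1) * (j + 1 + s + y - 1) + (y + 1) * j)) •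
            f (insertPair j (j + 1 + s) y z g h a) := by
  rw [show x + y - 1 = j + (y + (x - 1 - j)) by omega, sum_range_add, sum_range_add, ← add_assoc]
  congr 1
  · congr 1
    refine sum_congr rfl fun k hk => ?_
    rw [insertArgs_insertArgs_of_lt g hh a (mem_range.1 hk)]
  · refine sum_congr rfl fun s _ => ?_
    rw [insertPair, show j + 1 + s + y - 1 = j + (y + s) by omega]

lemma sum_range_sum_range_sub_comm {M : Type*} [AddCommMonoid M] (n : ℕ) (F : ℕ → ℕ → M) :
    ∑ j ∈ range n, ∑ s ∈ range (n - 1 - j), F j (j + 1 + s)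
      = ∑ q ∈ range n, ∑ p ∈ range q, F p q := by
  simp_rw [show ∀ j, n - 1 - j = n - (j + 1) by omega, ← sum_Ico_eq_sum_range]
  exact sum_comm' fun j q => by simp only [mem_range, mem_Ico]; omega

lemma circSeq_assoc_eq_sum_pairs {x : ℕ} (y z : ℕ) {f : (ℕ → A) → A} (hf : SlotAdditive x f)
    (g : (ℕ → A) → A) {h : (ℕ → A) → A} (hh : DependsOnFirst z h) (a : ℕ → A) :
    circSeq (x + y - 1) z (circSeq x y f g) h a - circSeq x (y + z - 1) f (circSeq y z g h) a
      = ∑ q ∈ range x, ∑ p ∈ range q,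
          (((-1 : ℤ) ^ ((z + 1) * p + (y + 1) * q)) • f (insertPair p q z y h g a)
            + ((-1 : ℤ) ^ ((z + 1) * (q + y - 1) + (y + 1) * p)) •
              f (insertPair p q y z g h a)) := by
  rw [circSeq_circSeq_left, circSeq_circSeq_right z hf, ← sum_sub_distrib,
    sum_congr rfl fun j hj => by
      rw [sum_insertArgs_split y z (mem_range.1 hj) f g hh a, add_right_comm, add_sub_cancel_right],
    sum_add_distrib, sum_range_sum_range_sub_comm x fun p q =>
      ((-1 : ℤ) ^ ((z + 1) * (q + y - 1) + (y + 1) * p)) • f (insertPair p q y z g h a)]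
  simp only [← sum_add_distrib]

theorem circSeq_preLie {x y z : ℕ} {f g h : (ℕ → A) → A} (hf : SlotAdditive x f)
    (hg : DependsOnFirst y g) (hh : DependsOnFirst z h) (a : ℕ → A) :
    circSeq (x + y - 1) z (circSeq x y f g) h a - circSeq x (y + z - 1) f (circSeq y z g h) a
      = (-1 : ℤ) ^ ((y + 1) * (z + 1)) •
        (circSeq (x + z - 1) y (circSeq x z f h) g a
          - circSeq x (z + y - 1) f (circSeq z y h g) a) := by
  rw [circSeq_assoc_eq_sum_pairs y z hf g hh, circSeq_assoc_eq_sum_pairs z y hf h hg, smul_sum]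
  refine sum_congr rfl fun q hq => ?_
  rw [smul_sum]
  refine sum_congr rfl fun p hp => ?_
  obtain ⟨r, rfl⟩ : ∃ r, q = r + 1 := ⟨q - 1, by rw [mem_range] at hp; omega⟩
  rw [smul_add, smul_smul, smul_smul, ← pow_add, ← pow_add, add_comm,
    show r + 1 + y - 1 = r + y by omega, show r + 1 + z - 1 = r + z by omega]
  congr 2
  · exact (neg_one_pow_eq_of_eq_add_two_mul (s := z + 1) (by ring)).symm
  · exact (neg_one_pow_eq_of_eq_add_two_mul (s := z * (y + 1)) (by ring)).symm

lemma dependsOnFirst_circSeq {d e : ℕ} {f g : (ℕ → A) → A} (hf : DependsOnFirst d f)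
    (hg : DependsOnFirst e g) : DependsOnFirst (d + e - 1) (circSeq d e f g) := by
  intro a b hab
  refine sum_congr rfl fun j hj => congrArg _ (hf _ _ fun i hi => ?_)
  rw [mem_range] at hj
  rcases lt_trichotomy i j with hij | rfl | hij
  · rw [insertArgs_of_lt hij, insertArgs_of_lt hij, hab i (by omega)]
  · rw [insertArgs_self, insertArgs_self, hg _ _ fun t ht => hab _ (by omega)]
  · rw [insertArgs_of_gt hij, insertArgs_of_gt hij, hab _ (by omega)]

lemma dependsOnFirst_gbrSeq {d e : ℕ} {f g : (ℕ → A) → A} (hf : DependsOnFirst d f)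
    (hg : DependsOnFirst e g) : DependsOnFirst (d + e - 1) (gbrSeq d e f g) := by
  intro a b hab
  simp only [gbrSeq]
  rw [dependsOnFirst_circSeq hf hg a b hab,
    dependsOnFirst_circSeq hg hf a b (by rwa [add_comm e])]

theorem gbrSeq_jacobi {x y z : ℕ} {f g h : (ℕ → A) → A}
    (hf : SlotAdditive x f) (hg : SlotAdditive y g) (hh : SlotAdditive z h)
    (hf' : DependsOnFirst x f) (hg' : DependsOnFirst y g) (hh' : DependsOnFirst z h)
    (hxy : 1 ≤ x + y) (hxz : 1 ≤ x + z) (hyz : 1 ≤ y + z) (a : ℕ → A) :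
    gbrSeq x (y + z - 1) f (gbrSeq y z g h) a
      = gbrSeq (x + y - 1) z (gbrSeq x y f g) h a
        + (-1 : ℤ) ^ ((x + 1) * (y + 1)) • gbrSeq y (x + z - 1) g (gbrSeq x z f h) a := by
  simp only [gbrSeq]
  rw [circSeq_gbrSeq_right _ _ _ hf, circSeq_gbrSeq_left, circSeq_gbrSeq_left,
    circSeq_gbrSeq_right _ _ _ hh, circSeq_gbrSeq_right _ _ _ hg, circSeq_gbrSeq_left]
  have hfgh := eq_add_of_sub_eq (circSeq_preLie hf hg' hh' a)
  have hghf := eq_add_of_sub_eq (circSeq_preLie hg hh' hf' a)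
  have hhfg := eq_add_of_sub_eq (circSeq_preLie hh hf' hg' a)
  simp only [add_comm z y, add_comm z x, add_comm y x] at hfgh hghf hhfg
  rw [hfgh, hghf, hhfg, Nat.sub_add_cancel hxy, Nat.sub_add_cancel hxz, Nat.sub_add_cancel hyz]
  by_cases hx : Even x <;> by_cases hy : Even y <;> by_cases hz : Even z <;>
    simp only [neg_one_pow_eq_ite, Nat.even_add, Nat.even_mul, Nat.even_add_one, hx, hy, hz,
      not_true_eq_false, not_false_eq_true, iff_true, iff_false, or_true, or_false, ite_true,
      ite_false] <;>
    module

lemma ofFin_res {n : ℕ} {F : (ℕ → A) → A} (hF : DependsOnFirst n F) : ofFin n (res n F) = F :=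
  funext fun b => hF _ _ fun i hi => by simp [pad, hi]

lemma slotAdditive_ofFin {R : Type*} [Semiring R] [Module R A] {n : ℕ}
    (D : MultilinearMap R (fun _ : Fin n => A) A) : SlotAdditive n (ofFin n ⇑D) := by
  intro j hj a x y
  simp only [ofFin]
  have hu : ∀ v, (fun i : Fin n => Function.update a j v i)
      = Function.update (fun i : Fin n => a i) ⟨j, hj⟩ v :=
    fun v => Function.update_comp_eq_of_injective a Fin.val_injective ⟨j, hj⟩ v
  simp only [hu, D.map_update_add]

end SequenceCochains

section Hochschild

variable [Ring A]

def mulSeq : (ℕ → A) → A := fun a => a 0 * a 1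

lemma slotAdditive_mulSeq : SlotAdditive 2 (mulSeq (A := A)) := by
  intro j hj a x y
  interval_cases j <;> simp [mulSeq, add_mul, mul_add]

lemma dependsOnFirst_mulSeq : DependsOnFirst 2 (mulSeq (A := A)) := fun a b hab => by
  simp only [mulSeq, hab 0 (by omega), hab 1 (by omega)]

lemma gbr_eq_gbrSeq (d e : ℕ) (F : (Fin d → A) → A) (G : (Fin e → A) → A) :
    gbr d e F G = gbrSeq d e (ofFin d F) (ofFin e G) := rfl

lemma hdel_eq_gbrSeq (n : ℕ) (F : (Fin n → A) → A) :
    hdel n F = gbrSeq 2 n mulSeq (ofFin n F) := by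
  funext b
  simp only [hdel, gbrSeq, circSeq, sum_range_succ, sum_range_zero, ofFin, insertArgs, mulSeq,
    lt_self_iff_false, Nat.not_lt_zero, zero_lt_one, one_ne_zero, zero_ne_one, ite_true, ite_false,
    zero_add, add_zero, mul_zero, mul_one, pow_zero, one_smul,
    show ∀ i : ℕ, i + 2 - 1 = i + 1 from fun _ => rfl, add_comm 1]
  rw [sub_eq_add_neg, smul_sum, ← Finset.sum_neg_distrib]
  congr 1
  refine sum_congr rfl fun j _ => ?_
  rw [smul_smul, ← neg_smul, ← pow_add, ← mul_neg_one ((-1 : ℤ) ^ _), ← pow_succ]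
  congr 1
  exact (neg_one_pow_eq_of_eq_add_two_mul (s := n + 1 + j) (by ring)).symm

lemma hdel_gbr_zero_zero (F G : (Fin 0 → A) → A) (a : Fin 0 → A) :
    res 0 (hdel 0 (res 0 (gbr 0 0 F G))) a
      = res 0 (gbr 1 0 (res 1 (hdel 0 F)) G) a - res 0 (gbr 0 1 F (res 1 (hdel 0 G))) a := by
  have hF : ∀ x, F x = F a := fun x => congrArg F (Subsingleton.elim x a)
  have hG : ∀ x, G x = G a := fun x => congrArg G (Subsingleton.elim x a)
  simp [gbr, circ, hdel, res, pad, hF, hG]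

end Hochschild

theorem statement4_general {K A : Type*} [CommRing K] [Ring A] [Algebra K A]
    (d e : ℕ) (D : Cochain K A d) (E : Cochain K A e) :
    ∀ a : Fin (d + e) → A,
      res (d + e) (hdel (d + e - 1) (res (d + e - 1) (gbr d e ⇑D ⇑E))) a
        = res (d + e) (gbr (d + 1) e (res (d + 1) (hdel d ⇑D)) ⇑E) a
          + ((-1 : ℤ) ^ (d + 1)) •
              res (d + e) (gbr d (e + 1) ⇑D (res (e + 1) (hdel e ⇑E))) a := by
  intro a
  rcases Nat.eq_zero_or_pos (d + e) with hde | hde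
  -- for `d = e = 0` the arity `d + e - 1` of `[D, E]` truncates to `0`: Jacobi does not apply
  · obtain ⟨rfl, rfl⟩ : d = 0 ∧ e = 0 := by omega
    simpa [sub_eq_add_neg] using hdel_gbr_zero_zero ⇑D ⇑E a
  have hD := dependsOnFirst_ofFin d ⇑D
  have hE := dependsOnFirst_ofFin e ⇑E
  have hδ {n : ℕ} {f : (ℕ → A) → A} (hf : DependsOnFirst n f) :
      DependsOnFirst (n + 1) (gbrSeq 2 n mulSeq f) := by
    simpa [add_comm] using dependsOnFirst_gbrSeq dependsOnFirst_mulSeq hf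
  simp only [gbr_eq_gbrSeq, hdel_eq_gbrSeq, ofFin_res (dependsOnFirst_gbrSeq hD hE),
    ofFin_res (hδ hD), ofFin_res (hδ hE), res]
  have hjacobi := gbrSeq_jacobi slotAdditive_mulSeq (slotAdditive_ofFin D) (slotAdditive_ofFin E)
    dependsOnFirst_mulSeq hD hE (by omega) (by omega) hde (pad a)
  rwa [show 2 + d - 1 = d + 1 by omega, show 2 + e - 1 = e + 1 by omega,
    neg_one_pow_eq_of_eq_add_two_mul (m := d + 1) (s := d + 1) (by ring)] at hjacobi

/-- The Hochschild differential is a graded derivation of the Gerstenhaber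
bracket: for all `D ∈ C^d(A)` and `E ∈ C^e(A)`,
`δ[D,E] = [δD, E] + (−1)^{d+1} [D, δE]` in `C^{d+e}(A)`. -/
theorem statement4 {K A : Type*} [CommRing K] [Algebra ℚ K] [Ring A] [Algebra K A]
    (d e : ℕ) (D : Cochain K A d) (E : Cochain K A e) :
    ∀ a : Fin (d + e) → A,
      res (d + e) (hdel (d + e - 1) (res (d + e - 1) (gbr d e ⇑D ⇑E))) a
        = res (d + e) (gbr (d + 1) e (res (d + 1) (hdel d ⇑D)) ⇑E) a
          + ((-1 : ℤ) ^ (d + 1)) •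
              res (d + e) (gbr d (e + 1) ⇑D (res (e + 1) (hdel e ⇑E))) a :=
  statement4_general d e D E

end NCCalc
end

section
/- The Gerstenhaber bracket satisfies the graded Jacobi identity (with degrees shifted by one): for all D ∈ C^d(A), E ∈ C^e(A), F ∈ C^f(A), [D,[E,F]] = [[D,E],F] + (−1)^{(d+1)(e+1)} [E,[D,F]] in C^{d+e+f−2}(A). Together with the graded antisymmetry [D,E] = −(−1)^{(d+1)(e+1)}[E,D], this makes C^{•+1}(A) a graded Lie algebra. -/
namespace NCCalc

variable {K A : Type*}

lemma negpow_even_diff {a b k : ℕ} (h : a = b + 2 * k) : ((-1 : ℤ) ^ a) = (-1 : ℤ) ^ b := by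
  subst h; rw [pow_add, pow_mul, neg_one_sq, one_pow, mul_one]

section Helpers
variable [AddCommGroup A]

/-- single-slot argument function -/
def sl (d : ℕ) (x y : ℕ → A) (j : ℕ) (v : A) : Fin d → A :=
  fun i => if (i : ℕ) < j then x i else if (i : ℕ) = j then v else y i

/-- double-slot argument function -/
def sl2 (d : ℕ) (x y z : ℕ → A) (p q : ℕ) (v w : A) : Fin d → A :=
  fun i => if (i : ℕ) < p then x i else if (i : ℕ) = p then v
    else if (i : ℕ) < q then y i else if (i : ℕ) = q then w else z i

/-- the sequence with `F`-value inserted at position `k` -/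
def bk (f : ℕ) (F : (Fin f → A) → A) (a : ℕ → A) (k : ℕ) : ℕ → A :=
  fun i => if i < k then a i else if i = k then F (fun t => a (k + (t : ℕ))) else a (i + f - 1)

lemma bk_lt {f : ℕ} {F : (Fin f → A) → A} {a : ℕ → A} {k i : ℕ} (h : i < k) :
    bk f F a k i = a i := if_pos h

lemma bk_eq {f : ℕ} {F : (Fin f → A) → A} {a : ℕ → A} {k : ℕ} :
    bk f F a k k = F (fun t => a (k + (t : ℕ))) := by
  simp [bk]

lemma bk_gt {f : ℕ} {F : (Fin f → A) → A} {a : ℕ → A} {k i : ℕ} (h : k < i) :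
    bk f F a k i = a (i + f - 1) := by
  unfold bk
  rw [if_neg (by omega), if_neg (by omega)]

lemma circ_sl (d e : ℕ) (D : (Fin d → A) → A) (E : (Fin e → A) → A) (a : ℕ → A) :
    circ d e D E a = ∑ j ∈ Finset.range d, ((-1 : ℤ) ^ ((e + 1) * j)) •
      D (sl d a (fun i => a (i + e - 1)) j (E (fun t => a (j + (t : ℕ))))) := rfl

lemma sl_update {d : ℕ} (x y : ℕ → A) {j : ℕ} (hj : j < d) (v : A) :
    sl d x y j v = Function.update (sl d x y j 0) ⟨j, hj⟩ v := by
  funext i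
  rcases eq_or_ne i ⟨j, hj⟩ with h | h
  · subst h
    simp [sl, Function.update]
  · have h' : (i : ℕ) ≠ j := fun hh => h (Fin.ext hh)
    rw [Function.update_of_ne h]
    simp only [sl, if_neg h']

lemma circ_congr (d e : ℕ) (D : (Fin d → A) → A) (E : (Fin e → A) → A) {a b : ℕ → A}
    (h : ∀ i, i < d + e - 1 → a i = b i) : circ d e D E a = circ d e D E b := by
  unfold circ
  refine Finset.sum_congr rfl fun j hj => ?_
  have hjd : j < d := Finset.mem_range.mp hj
  congr 1
  apply congrArg
  funext i
  have hi : (i : ℕ) < d := i.isLt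
  by_cases h1 : (i : ℕ) < j
  · simp only [if_pos h1]; exact h _ (by omega)
  · by_cases h2 : (i : ℕ) = j
    · simp only [if_neg h1, if_pos h2]
      apply congrArg
      funext t
      have ht : (t : ℕ) < e := t.isLt
      exact h _ (by omega)
    · simp only [if_neg h1, if_neg h2]
      exact h _ (by omega)

lemma res_circ_eq (n d e : ℕ) (hn : d + e - 1 ≤ n) (D : (Fin d → A) → A)
    (E : (Fin e → A) → A) (g : Fin n → A) (b : ℕ → A)
    (hgb : ∀ (i : ℕ) (hi : i < n), g ⟨i, hi⟩ = b i) :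
    res n (circ d e D E) g = circ d e D E b := by
  unfold res
  apply circ_congr
  intro i hi
  have hi' : i < n := lt_of_lt_of_le hi hn
  simp only [pad, dif_pos hi']
  exact hgb i hi'

/-- term of the disjoint double-insertion sum, `E` before `F` -/
def EFt (d e f : ℕ) (D : (Fin d → A) → A) (E : (Fin e → A) → A) (F : (Fin f → A) → A)
    (a : ℕ → A) (p q : ℕ) : A :=
  ((-1 : ℤ) ^ ((e + 1) * p + (f + 1) * (q + e - 1))) •
    D (sl2 d a (fun i => a (i + e - 1)) (fun i => a (i + e + f - 2)) p q
      (E (fun t => a (p + (t : ℕ)))) (F (fun t => a (q + e - 1 + (t : ℕ)))))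

/-- term of the disjoint double-insertion sum, `F` before `E` -/
def FEt (d e f : ℕ) (D : (Fin d → A) → A) (E : (Fin e → A) → A) (F : (Fin f → A) → A)
    (a : ℕ → A) (p q : ℕ) : A :=
  ((-1 : ℤ) ^ ((f + 1) * p + (e + 1) * q)) •
    D (sl2 d a (fun i => a (i + f - 1)) (fun i => a (i + e + f - 2)) p q
      (F (fun t => a (p + (t : ℕ)))) (E (fun t => a (q + f - 1 + (t : ℕ)))))

/-- disjoint double-insertion sum -/
def dd (d e f : ℕ) (D : (Fin d → A) → A) (E : (Fin e → A) → A) (F : (Fin f → A) → A)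
    (a : ℕ → A) : A :=
  ∑ q ∈ Finset.range d, ∑ p ∈ Finset.range q,
    (EFt d e f D E F a p q + FEt d e f D E F a p q)

lemma ddsym (d e f : ℕ) (D : (Fin d → A) → A) (E : (Fin e → A) → A) (F : (Fin f → A) → A)
    (a : ℕ → A) :
    dd d e f D E F a = ((-1 : ℤ) ^ ((e + 1) * (f + 1))) • dd d f e D F E a := by
  unfold dd EFt FEt
  rw [Finset.smul_sum]
  refine Finset.sum_congr rfl fun q _ => ?_
  rw [Finset.smul_sum]
  refine Finset.sum_congr rfl fun p hp => ?_
  have hpq : p < q := Finset.mem_range.mp hp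
  obtain ⟨q', rfl⟩ : ∃ q', q = q' + 1 := ⟨q - 1, by omega⟩
  rw [smul_add]
  conv_rhs => rw [add_comm]
  congr 1
  · rw [smul_smul, ← pow_add]
    have hz : ∀ i : ℕ, i + f + e - 2 = i + e + f - 2 := fun i => by omega
    simp only [hz]
    congr 1
    refine (negpow_even_diff (k := f + 1) ?_).symm
    rw [show q' + 1 + e - 1 = q' + e from by omega]
    ring
  · rw [smul_smul, ← pow_add]
    have hz : ∀ i : ℕ, i + f + e - 2 = i + e + f - 2 := fun i => by omega
    simp only [hz]
    congr 1
    refine (negpow_even_diff (k := (e + 1) * f) ?_).symm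
    rw [show q' + 1 + f - 1 = q' + f from by omega]
    ring

lemma tri (n : ℕ) (g : ℕ → ℕ → A) :
    ∑ q ∈ Finset.range n, ∑ p ∈ Finset.range q, g p q
      = ∑ p ∈ Finset.range n, ∑ q ∈ Finset.Ico (p + 1) n, g p q := by
  induction n with
  | zero => simp
  | succ n ih =>
    rw [Finset.sum_range_succ, ih, Finset.sum_range_succ]
    have h1 : ∀ p ∈ Finset.range n,
        ∑ q ∈ Finset.Ico (p + 1) (n + 1), g p q
          = ∑ q ∈ Finset.Ico (p + 1) n, g p q + g p n := by
      intro p hp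
      exact Finset.sum_Ico_succ_top (Finset.mem_range.mp hp) _
    rw [Finset.sum_congr rfl h1, Finset.sum_add_distrib, Finset.Ico_self, Finset.sum_empty,
      add_zero]

end Helpers

section Mult
variable [CommRing K] [AddCommGroup A] [Module K A]

lemma Dsl_zero {d : ℕ} (D : Cochain K A d) (x y : ℕ → A) {j : ℕ} (hj : j < d) :
    D (sl d x y j 0) = 0 := by
  rw [sl_update x y hj]; exact D.map_update_zero _ _

lemma Dsl_sub {d : ℕ} (D : Cochain K A d) (x y : ℕ → A) {j : ℕ} (hj : j < d) (v w : A) :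
    D (sl d x y j (v - w)) = D (sl d x y j v) - D (sl d x y j w) := by
  rw [sl_update x y hj, sl_update x y hj v, sl_update x y hj w]
  exact D.map_update_sub _ _ _ _

lemma Dsl_zsmul {d : ℕ} (D : Cochain K A d) (x y : ℕ → A) {j : ℕ} (hj : j < d) (c : ℤ) (v : A) :
    D (sl d x y j (c • v)) = c • D (sl d x y j v) := by
  rw [sl_update x y hj, sl_update x y hj v, ← Int.cast_smul_eq_zsmul K c v,
    D.map_update_smul, Int.cast_smul_eq_zsmul]

lemma Dsl_sum {d : ℕ} (D : Cochain K A d) (x y : ℕ → A) {j : ℕ} (hj : j < d)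
    {α : Type*} (s : Finset α) (g : α → A) :
    D (sl d x y j (∑ i ∈ s, g i)) = ∑ i ∈ s, D (sl d x y j (g i)) := by
  rw [sl_update x y hj, D.map_update_sum]
  exact Finset.sum_congr rfl fun i _ => by rw [← sl_update x y hj]

/-- right (inner-slot) linearity of `circ` in its second function argument -/
lemma circ_right_sub (d m : ℕ) (D : Cochain K A d) (G1 G2 : (Fin m → A) → A) (c : ℤ)
    (a : ℕ → A) :
    circ d m (⇑D) (fun b => G1 b - c • G2 b) a
      = circ d m (⇑D) G1 a - c • circ d m (⇑D) G2 a := by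
  rw [circ_sl, circ_sl, circ_sl, Finset.smul_sum, ← Finset.sum_sub_distrib]
  refine Finset.sum_congr rfl fun j hj => ?_
  have hjd : j < d := Finset.mem_range.mp hj
  rw [Dsl_sub D _ _ hjd, Dsl_zsmul D _ _ hjd, smul_sub, smul_comm ((-1 : ℤ) ^ ((m + 1) * j)) c]

/-- left (outer) linearity of `circ` in its first function argument -/
lemma circ_left_sub (m d' : ℕ) (G1 G2 : (Fin m → A) → A) (c : ℤ)
    (P : (Fin d' → A) → A) (a : ℕ → A) :
    circ m d' (fun b => G1 b - c • G2 b) P a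
      = circ m d' G1 P a - c • circ m d' G2 P a := by
  unfold circ
  rw [Finset.smul_sum, ← Finset.sum_sub_distrib]
  refine Finset.sum_congr rfl fun k _ => ?_
  rw [smul_sub, smul_comm ((-1 : ℤ) ^ ((d' + 1) * k)) c]

/-- The fundamental pre-Lie ("associator") expansion:
`(D∘E)∘F = D∘(E∘F) + (disjoint double-insertion sum)`. -/
lemma preLie {d e f m₁ m₂ : ℕ}
    (h₁ : m₁ = d + e - 1) (h₂ : m₂ = e + f - 1)
    (D : Cochain K A d) (E : (Fin e → A) → A) (F : (Fin f → A) → A) (a : ℕ → A) :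
    circ m₁ f (res m₁ (circ d e (⇑D) E)) F a
      = circ d m₂ (⇑D) (res m₂ (circ e f E F)) a + dd d e f (⇑D) E F a := by
  subst h₁ h₂
  rcases Nat.eq_zero_or_pos d with rfl | hd
  · simp [circ, dd, res]
  set m := d + e - 1 with hm
  -- Step 1&2 : full expansion into a double sum
  have step2 : circ m f (res m (circ d e (⇑D) E)) F a
      = ∑ j ∈ Finset.range d, ∑ k ∈ Finset.range m,
          ((-1 : ℤ) ^ ((f + 1) * k + (e + 1) * j)) •
            D (sl d (bk f F a k) (fun i => bk f F a k (i + e - 1)) j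
              (E (fun t => bk f F a k (j + (t : ℕ))))) := by
    rw [circ_sl]
    rw [show (∑ k ∈ Finset.range m, ((-1 : ℤ) ^ ((f + 1) * k)) •
        (res m (circ d e (⇑D) E))
          (sl m a (fun i => a (i + f - 1)) k (F (fun t => a (k + (t : ℕ)))))) =
        ∑ k ∈ Finset.range m, ∑ j ∈ Finset.range d,
          ((-1 : ℤ) ^ ((f + 1) * k + (e + 1) * j)) •
            D (sl d (bk f F a k) (fun i => bk f F a k (i + e - 1)) j
              (E (fun t => bk f F a k (j + (t : ℕ))))) from ?_, Finset.sum_comm]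
    refine Finset.sum_congr rfl fun k _ => ?_
    rw [res_circ_eq m d e (le_of_eq hm.symm) (⇑D) E _ (bk f F a k) (fun i hi => rfl),
      circ_sl d e (⇑D) E (bk f F a k), Finset.smul_sum]
    refine Finset.sum_congr rfl fun j _ => ?_
    rw [smul_smul, ← pow_add]
  rw [step2]
  -- region splitting per j
  have step3 : ∀ j ∈ Finset.range d,
      (∑ k ∈ Finset.range m, ((-1 : ℤ) ^ ((f + 1) * k + (e + 1) * j)) •
          D (sl d (bk f F a k) (fun i => bk f F a k (i + e - 1)) j
            (E (fun t => bk f F a k (j + (t : ℕ))))))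
        = (∑ k ∈ Finset.range j, ((-1 : ℤ) ^ ((f + 1) * k + (e + 1) * j)) •
            D (sl d (bk f F a k) (fun i => bk f F a k (i + e - 1)) j
              (E (fun t => bk f F a k (j + (t : ℕ))))))
          + (∑ k ∈ Finset.Ico j (j + e), ((-1 : ℤ) ^ ((f + 1) * k + (e + 1) * j)) •
              D (sl d (bk f F a k) (fun i => bk f F a k (i + e - 1)) j
                (E (fun t => bk f F a k (j + (t : ℕ))))))
          + (∑ k ∈ Finset.Ico (j + e) m, ((-1 : ℤ) ^ ((f + 1) * k + (e + 1) * j)) •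
              D (sl d (bk f F a k) (fun i => bk f F a k (i + e - 1)) j
                (E (fun t => bk f F a k (j + (t : ℕ)))))) := by
    intro j hj
    have hjd : j < d := Finset.mem_range.mp hj
    have hje : j + e ≤ m := by omega
    rw [Finset.range_eq_Ico,
      ← Finset.sum_Ico_consecutive _ (Nat.zero_le (j + e)) hje,
      ← Finset.sum_Ico_consecutive _ (Nat.zero_le j) (Nat.le_add_right j e),
      ← Finset.range_eq_Ico]
  rw [Finset.sum_congr rfl step3]
  rw [Finset.sum_add_distrib, Finset.sum_add_distrib]
  -- Region 2 : the `D∘(E∘F)` part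
  have hR2 : ∀ j ∈ Finset.range d,
      (∑ k ∈ Finset.Ico j (j + e), ((-1 : ℤ) ^ ((f + 1) * k + (e + 1) * j)) •
          D (sl d (bk f F a k) (fun i => bk f F a k (i + e - 1)) j
            (E (fun t => bk f F a k (j + (t : ℕ))))))
        = ((-1 : ℤ) ^ ((e + f - 1 + 1) * j)) •
            D (sl d a (fun i => a (i + (e + f - 1) - 1)) j
              ((res (e + f - 1) (circ e f E F)) (fun t => a (j + (t : ℕ))))) := by
    intro j hj
    have hjd : j < d := Finset.mem_range.mp hj
    rcases Nat.eq_zero_or_pos e with rfl | he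
    · rw [Nat.add_zero, Finset.Ico_self, Finset.sum_empty]
      have hres : (res (0 + f - 1) (circ 0 f E F)) (fun t => a (j + (t : ℕ))) = 0 := by
        simp [res, circ]
      rw [hres, Dsl_zero D _ _ hjd, smul_zero]
    · have hres : (res (e + f - 1) (circ e f E F)) (fun t : Fin (e + f - 1) => a (j + (t : ℕ)))
          = circ e f E F (fun l => a (j + l)) :=
        res_circ_eq _ e f le_rfl E F _ _ (fun i hi => rfl)
      rw [hres, circ_sl e f E F, Dsl_sum D _ _ hjd, Finset.smul_sum,
        Finset.sum_Ico_eq_sum_range, show j + e - j = e from by omega]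
      refine Finset.sum_congr rfl fun i hi => ?_
      have hie : i < e := Finset.mem_range.mp hi
      rw [Dsl_zsmul D _ _ hjd, smul_smul, ← pow_add]
      congr 1
      · apply negpow_even_diff (k := j)
        rw [show e + f - 1 + 1 = e + f from by omega]
        ring
      · apply congrArg
        funext i'
        simp only [sl]
        by_cases h1 : (i' : ℕ) < j
        · rw [if_pos h1, if_pos h1, bk_lt (by omega)]
        · by_cases h2 : (i' : ℕ) = j
          · rw [if_neg h1, if_pos h2, if_neg h1, if_pos h2]
            apply congrArg
            funext t
            have ht : (t : ℕ) < e := t.isLt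
            simp only [sl]
            by_cases ht1 : (t : ℕ) < i
            · rw [bk_lt (by omega), if_pos ht1]
            · by_cases ht2 : (t : ℕ) = i
              · rw [if_neg ht1, if_pos ht2, show j + (t : ℕ) = j + i by omega, bk_eq]
                apply congrArg
                funext t'
                congr 1
                omega
              · rw [bk_gt (by omega), if_neg ht1, if_neg ht2]
                congr 1
                omega
          · rw [if_neg h1, if_neg h2, if_neg h1, if_neg h2, bk_gt (by omega)]
            congr 1
            omega
  -- Region 1 : the `F`-before-`E` disjoint part
  have hR1 : ∀ j ∈ Finset.range d,
      (∑ k ∈ Finset.range j, ((-1 : ℤ) ^ ((f + 1) * k + (e + 1) * j)) •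
          D (sl d (bk f F a k) (fun i => bk f F a k (i + e - 1)) j
            (E (fun t => bk f F a k (j + (t : ℕ))))))
        = ∑ p ∈ Finset.range j, FEt d e f (⇑D) E F a p j := by
    intro j hj
    have hjd : j < d := Finset.mem_range.mp hj
    refine Finset.sum_congr rfl fun k hk => ?_
    have hkj : k < j := Finset.mem_range.mp hk
    unfold FEt
    congr 1
    apply congrArg
    funext i'
    simp only [sl, sl2]
    by_cases h1 : (i' : ℕ) < j
    · rw [if_pos h1]
      by_cases h2 : (i' : ℕ) < k
      · rw [if_pos h2, bk_lt h2]
      · by_cases h3 : (i' : ℕ) = k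
        · rw [if_neg h2, if_pos h3, h3, bk_eq]
        · rw [if_neg h2, if_neg h3, if_pos h1, bk_gt (by omega)]
    · by_cases h2 : (i' : ℕ) = j
      · rw [if_neg h1, if_pos h2, if_neg (by omega : ¬ (i' : ℕ) < k),
          if_neg (by omega : ¬ (i' : ℕ) = k), if_neg h1, if_pos h2]
        apply congrArg
        funext t
        rw [bk_gt (by omega)]
        congr 1
        omega
      · rw [if_neg h1, if_neg h2, if_neg (by omega : ¬ (i' : ℕ) < k),
          if_neg (by omega : ¬ (i' : ℕ) = k), if_neg h1, if_neg h2, bk_gt (by omega)]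
        congr 1
        omega
  -- Region 3 : the `E`-before-`F` disjoint part
  have hR3 : ∀ j ∈ Finset.range d,
      (∑ k ∈ Finset.Ico (j + e) m, ((-1 : ℤ) ^ ((f + 1) * k + (e + 1) * j)) •
          D (sl d (bk f F a k) (fun i => bk f F a k (i + e - 1)) j
            (E (fun t => bk f F a k (j + (t : ℕ))))))
        = ∑ q ∈ Finset.Ico (j + 1) d, EFt d e f (⇑D) E F a j q := by
    intro j hj
    have hjd : j < d := Finset.mem_range.mp hj
    rw [Finset.sum_Ico_eq_sum_range, Finset.sum_Ico_eq_sum_range,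
      show m - (j + e) = d - (j + 1) from by omega]
    refine Finset.sum_congr rfl fun i hi => ?_
    have hid : i < d - (j + 1) := Finset.mem_range.mp hi
    unfold EFt
    congr 1
    · rw [show j + 1 + i + e - 1 = j + e + i from by omega]
      ring_nf
    · apply congrArg
      funext i'
      simp only [sl, sl2]
      by_cases h1 : (i' : ℕ) < j
      · simp only [if_pos h1]
        exact bk_lt (by omega)
      · by_cases h2 : (i' : ℕ) = j
        · simp only [if_neg h1, if_pos h2]
          apply congrArg
          funext t
          have ht : (t : ℕ) < e := t.isLt
          rw [bk_lt (by omega)]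
        · simp only [if_neg h1, if_neg h2]
          by_cases h3 : (i' : ℕ) < j + 1 + i
          · simp only [if_pos h3]
            exact bk_lt (by omega)
          · by_cases h4 : (i' : ℕ) = j + 1 + i
            · simp only [if_neg h3, if_pos h4]
              rw [show (i' : ℕ) + e - 1 = j + e + i from by omega, bk_eq]
              apply congrArg
              funext t'
              congr 1
              omega
            · simp only [if_neg h3, if_neg h4]
              rw [bk_gt (by omega)]
              congr 1
              omega
  rw [Finset.sum_congr rfl hR1, Finset.sum_congr rfl hR2, Finset.sum_congr rfl hR3]
  rw [← circ_sl d (e + f - 1) (⇑D) (res (e + f - 1) (circ e f E F)) a]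
  unfold dd
  rw [show (∑ q ∈ Finset.range d, ∑ p ∈ Finset.range q,
      (EFt d e f (⇑D) E F a p q + FEt d e f (⇑D) E F a p q))
      = (∑ q ∈ Finset.range d, ∑ p ∈ Finset.range q, EFt d e f (⇑D) E F a p q)
        + (∑ q ∈ Finset.range d, ∑ p ∈ Finset.range q, FEt d e f (⇑D) E F a p q) from by
    rw [← Finset.sum_add_distrib]
    exact Finset.sum_congr rfl fun q _ => Finset.sum_add_distrib]
  rw [tri d (fun p q => EFt d e f (⇑D) E F a p q)]
  abel

lemma circ_outer_zero (d' : ℕ) (X : (Fin 0 → A) → A) (P : (Fin d' → A) → A) (s : ℕ → A) :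
    circ 0 d' X P s = 0 := by simp [circ]

lemma circ_inner_zero {d' m : ℕ} (W : Cochain K A d') (Z : (Fin m → A) → A)
    (hZ : ∀ g, Z g = 0) (s : ℕ → A) : circ d' m (⇑W) Z s = 0 := by
  rw [circ_sl]
  refine Finset.sum_eq_zero fun j hj => ?_
  rw [hZ, Dsl_zero W _ _ (Finset.mem_range.mp hj), smul_zero]

lemma res_gbr_zero (p q : ℕ) (hpq : p + q = 0) (P : (Fin p → A) → A) (Q : (Fin q → A) → A)
    (m : ℕ) (hm : m = p + q - 1) (g : Fin m → A) : res m (gbr p q P Q) g = 0 := by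
  obtain ⟨rfl, rfl⟩ : p = 0 ∧ q = 0 := by omega
  simp [res, gbr, circ]

lemma res_circ_zero0 (p q : ℕ) (hpq : p + q = 0) (P : (Fin p → A) → A) (Q : (Fin q → A) → A)
    (m : ℕ) (hm : m = p + q - 1) (g : Fin m → A) : res m (circ p q P Q) g = 0 := by
  obtain ⟨rfl, rfl⟩ : p = 0 ∧ q = 0 := by omega
  simp [res, circ]

/-- clean form of `[D, [P,Q]]` -/
lemma gbr_clean_right {d p q m : ℕ} (hm : m = p + q - 1)
    (D : Cochain K A d) (P : (Fin p → A) → A) (Q : (Fin q → A) → A) (s : ℕ → A) :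
    gbr d m (⇑D) (res m (gbr p q P Q)) s
      = (circ d m (⇑D) (res m (circ p q P Q)) s
          - ((-1 : ℤ) ^ ((p + 1) * (q + 1))) • circ d m (⇑D) (res m (circ q p Q P)) s)
        - (((-1 : ℤ) ^ ((d + 1) * (p + 1))) * ((-1 : ℤ) ^ ((d + 1) * (q + 1)))) •
          (circ m d (res m (circ p q P Q)) (⇑D) s
            - ((-1 : ℤ) ^ ((p + 1) * (q + 1))) • circ m d (res m (circ q p Q P)) (⇑D) s) := by
  have h1 : circ d m (⇑D) (res m (gbr p q P Q)) s
      = circ d m (⇑D) (res m (circ p q P Q)) s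
        - ((-1 : ℤ) ^ ((p + 1) * (q + 1))) • circ d m (⇑D) (res m (circ q p Q P)) s :=
    circ_right_sub d m D (res m (circ p q P Q)) (res m (circ q p Q P))
      ((-1 : ℤ) ^ ((p + 1) * (q + 1))) s
  have h2 : circ m d (res m (gbr p q P Q)) (⇑D) s
      = circ m d (res m (circ p q P Q)) (⇑D) s
        - ((-1 : ℤ) ^ ((p + 1) * (q + 1))) • circ m d (res m (circ q p Q P)) (⇑D) s :=
    circ_left_sub m d (res m (circ p q P Q)) (res m (circ q p Q P))
      ((-1 : ℤ) ^ ((p + 1) * (q + 1))) (⇑D) s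
  have h3 : ((-1 : ℤ) ^ ((d + 1) * (m + 1))) •
        (circ m d (res m (circ p q P Q)) (⇑D) s
          - ((-1 : ℤ) ^ ((p + 1) * (q + 1))) • circ m d (res m (circ q p Q P)) (⇑D) s)
      = (((-1 : ℤ) ^ ((d + 1) * (p + 1))) * ((-1 : ℤ) ^ ((d + 1) * (q + 1)))) •
        (circ m d (res m (circ p q P Q)) (⇑D) s
          - ((-1 : ℤ) ^ ((p + 1) * (q + 1))) • circ m d (res m (circ q p Q P)) (⇑D) s) := by
    rcases Nat.eq_zero_or_pos (p + q) with h0 | hpos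
    · have hm0 : m = 0 := by omega
      subst hm0
      rw [circ_outer_zero, circ_outer_zero]
      simp
    · congr 1
      rw [← pow_add]
      refine (negpow_even_diff (k := d + 1) ?_).symm
      rw [hm, show p + q - 1 + 1 = p + q from by omega]
      ring
  show circ d m (⇑D) (res m (gbr p q P Q)) s
      - ((-1 : ℤ) ^ ((d + 1) * (m + 1))) • circ m d (res m (gbr p q P Q)) (⇑D) s = _
  rw [h1, h2, h3]

/-- clean form of `[[P,Q], W]` -/
lemma gbr_clean_left {d' p q m : ℕ} (hm : m = p + q - 1)
    (P : (Fin p → A) → A) (Q : (Fin q → A) → A) (W : Cochain K A d') (s : ℕ → A) :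
    gbr m d' (res m (gbr p q P Q)) (⇑W) s
      = (circ m d' (res m (circ p q P Q)) (⇑W) s
          - ((-1 : ℤ) ^ ((p + 1) * (q + 1))) • circ m d' (res m (circ q p Q P)) (⇑W) s)
        - (((-1 : ℤ) ^ ((p + 1) * (d' + 1))) * ((-1 : ℤ) ^ ((q + 1) * (d' + 1)))) •
          (circ d' m (⇑W) (res m (circ p q P Q)) s
            - ((-1 : ℤ) ^ ((p + 1) * (q + 1))) • circ d' m (⇑W) (res m (circ q p Q P)) s) := by
  have h1 : circ m d' (res m (gbr p q P Q)) (⇑W) s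
      = circ m d' (res m (circ p q P Q)) (⇑W) s
        - ((-1 : ℤ) ^ ((p + 1) * (q + 1))) • circ m d' (res m (circ q p Q P)) (⇑W) s :=
    circ_left_sub m d' (res m (circ p q P Q)) (res m (circ q p Q P))
      ((-1 : ℤ) ^ ((p + 1) * (q + 1))) (⇑W) s
  have h2 : circ d' m (⇑W) (res m (gbr p q P Q)) s
      = circ d' m (⇑W) (res m (circ p q P Q)) s
        - ((-1 : ℤ) ^ ((p + 1) * (q + 1))) • circ d' m (⇑W) (res m (circ q p Q P)) s :=
    circ_right_sub d' m W (res m (circ p q P Q)) (res m (circ q p Q P))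
      ((-1 : ℤ) ^ ((p + 1) * (q + 1))) s
  have h3 : ((-1 : ℤ) ^ ((m + 1) * (d' + 1))) •
        (circ d' m (⇑W) (res m (circ p q P Q)) s
          - ((-1 : ℤ) ^ ((p + 1) * (q + 1))) • circ d' m (⇑W) (res m (circ q p Q P)) s)
      = (((-1 : ℤ) ^ ((p + 1) * (d' + 1))) * ((-1 : ℤ) ^ ((q + 1) * (d' + 1)))) •
        (circ d' m (⇑W) (res m (circ p q P Q)) s
          - ((-1 : ℤ) ^ ((p + 1) * (q + 1))) • circ d' m (⇑W) (res m (circ q p Q P)) s) := by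
    rcases Nat.eq_zero_or_pos (p + q) with h0 | hpos
    · rw [circ_inner_zero W _ (res_circ_zero0 p q h0 P Q m hm) s,
        circ_inner_zero W _ (res_circ_zero0 q p (by omega) Q P m (by omega)) s]
      simp
    · congr 1
      rw [← pow_add]
      refine (negpow_even_diff (k := d' + 1) ?_).symm
      rw [hm, show p + q - 1 + 1 = p + q from by omega]
      ring
  show circ m d' (res m (gbr p q P Q)) (⇑W) s
      - ((-1 : ℤ) ^ ((m + 1) * (d' + 1))) • circ d' m (⇑W) (res m (gbr p q P Q)) s = _
  rw [h1, h2, h3]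

end Mult

/-- The Gerstenhaber bracket satisfies the graded Jacobi identity (with degrees
shifted by one): for all `D ∈ C^d(A)`, `E ∈ C^e(A)`, `F ∈ C^f(A)`,
`[D,[E,F]] = [[D,E],F] + (−1)^{(d+1)(e+1)} [E,[D,F]]` in `C^{d+e+f−2}(A)`.
Together with the graded antisymmetry `[D,E] = −(−1)^{(d+1)(e+1)}[E,D]`, this makes
`C^{•+1}(A)` a graded Lie algebra. -/
theorem statement6 {K A : Type*} [CommRing K] [Algebra ℚ K] [Ring A] [Algebra K A]
    (d e f : ℕ) (D : Cochain K A d) (E : Cochain K A e) (F : Cochain K A f) :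
    (∀ a : Fin (d + e + f - 2) → A,
      res (d + e + f - 2) (gbr d (e + f - 1) ⇑D (res (e + f - 1) (gbr e f ⇑E ⇑F))) a
        = res (d + e + f - 2) (gbr (d + e - 1) f (res (d + e - 1) (gbr d e ⇑D ⇑E)) ⇑F) a
          + ((-1 : ℤ) ^ ((d + 1) * (e + 1))) •
              res (d + e + f - 2)
                (gbr e (d + f - 1) ⇑E (res (d + f - 1) (gbr d f ⇑D ⇑F))) a)
    ∧ (∀ a : Fin (d + e - 1) → A,
      res (d + e - 1) (gbr d e ⇑D ⇑E) a
        = -(((-1 : ℤ) ^ ((d + 1) * (e + 1))) • res (d + e - 1) (gbr e d ⇑E ⇑D) a)) := by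
  constructor
  · intro a
    show gbr d (e + f - 1) ⇑D (res (e + f - 1) (gbr e f ⇑E ⇑F)) (pad a)
        = gbr (d + e - 1) f (res (d + e - 1) (gbr d e ⇑D ⇑E)) ⇑F (pad a)
          + ((-1 : ℤ) ^ ((d + 1) * (e + 1))) •
              gbr e (d + f - 1) ⇑E (res (d + f - 1) (gbr d f ⇑D ⇑F)) (pad a)
    set s : ℕ → A := pad a with hs
    rw [gbr_clean_right rfl D (⇑E) (⇑F) s]
    rw [gbr_clean_left rfl (⇑D) (⇑E) F s]
    rw [gbr_clean_right rfl E (⇑D) (⇑F) s]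
    have A1 := preLie rfl rfl D (⇑E) (⇑F) s
    have A2 := preLie (m₁ := d + f - 1) (m₂ := e + f - 1) rfl (by omega) D (⇑F) (⇑E) s
    have A3 := preLie (m₁ := d + e - 1) (m₂ := d + f - 1) (by omega) rfl E (⇑D) (⇑F) s
    have A4 := preLie (m₁ := e + f - 1) (m₂ := d + f - 1) rfl (by omega) E (⇑F) (⇑D) s
    have A5 := preLie (m₁ := d + f - 1) (m₂ := d + e - 1) (by omega) rfl F (⇑D) (⇑E) s
    have A6 := preLie (m₁ := e + f - 1) (m₂ := d + e - 1) (by omega) (by omega) F (⇑E) (⇑D) s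
    have S1 := ddsym d e f (⇑D) (⇑E) (⇑F) s
    have S2 := ddsym e d f (⇑E) (⇑D) (⇑F) s
    have S3 := ddsym f d e (⇑F) (⇑D) (⇑E) s
    rw [A4, A6, A1, A3, A2, A5, S1, S2, S3]
    have key : ∀ n : ℕ, ((-1 : ℤ)) ^ n = 1 ∨ ((-1 : ℤ)) ^ n = -1 := fun n =>
      (Nat.even_or_odd n).imp (fun h => h.neg_one_pow) (fun h => h.neg_one_pow)
    have hcomm : (e + 1) * (d + 1) = (d + 1) * (e + 1) := Nat.mul_comm _ _
    rw [hcomm]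
    rcases key ((d + 1) * (e + 1)) with hu | hu <;>
      rcases key ((d + 1) * (f + 1)) with hv | hv <;>
        rcases key ((e + 1) * (f + 1)) with hw | hw <;>
          rw [hu, hv, hw] <;>
            simp only [one_smul, neg_smul, one_mul, neg_mul, mul_one, mul_neg, neg_neg,
              smul_sub, smul_add, smul_neg, sub_eq_add_neg] <;>
              abel
  · intro a
    show circ d e ⇑D ⇑E (pad a) - ((-1 : ℤ) ^ ((d + 1) * (e + 1))) • circ e d ⇑E ⇑D (pad a)
        = -(((-1 : ℤ) ^ ((d + 1) * (e + 1))) •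
            (circ e d ⇑E ⇑D (pad a) - ((-1 : ℤ) ^ ((e + 1) * (d + 1))) • circ d e ⇑D ⇑E (pad a)))
    have huu : ((-1 : ℤ) ^ ((d + 1) * (e + 1))) * ((-1 : ℤ) ^ ((e + 1) * (d + 1))) = 1 := by
      rw [← pow_add]
      have h := negpow_even_diff (a := (d + 1) * (e + 1) + (e + 1) * (d + 1)) (b := 0)
        (k := (d + 1) * (e + 1)) (by ring)
      rw [h, pow_zero]
    rw [smul_sub, smul_smul, huu, one_smul, neg_sub]


end NCCalc
end
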